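/- arXiv:2209.01594 — 3 statements merged into one kernel-verified Lean document; each statement's English description precedes it below -/
import Mathlib

section
/- Let b ∈ (0,1) and let (a_t)_{t≥1} be the real sequence defined by an initial condition a₁ > 0 and the recursion a_{t+1} = f(a_t), where f(a) = (1 − b·a/(1+a))·a. Then for every α > 0 there exists T such that for all t ≥ T, (1−α)/(b t) ≤ a_t ≤ (1+α)/(b t). -/
/-!
The reciprocals satisfy `1 / a_{t+1} = 1 / a_t + b / (1 + (1 - b) a_t)`. As `a_t` decreases, these
increments stay above a positive constant, so `1 / a_t → ∞` and `a_t → 0`; hence the increments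
tend to `b`, and by Cesàro `1 / (t a_t) → b`.
-/

open Filter Finset Topology

theorem Filter.Tendsto.div_natCast_of_tendsto_sub {u : ℕ → ℝ} {b : ℝ}
    (h : Tendsto (fun n => u (n + 1) - u n) atTop (𝓝 b)) :
    Tendsto (fun n : ℕ => u n / n) atTop (𝓝 b) := by
  have hsplit : ∀ n : ℕ, u n / n = u 0 / n + (n : ℝ)⁻¹ * ∑ i ∈ range n, (u (i + 1) - u i) := by
    intro n
    rw [sum_range_sub]
    ring
  simpa only [hsplit, zero_add] using (tendsto_const_div_atTop_nhds_zero_nat (u 0)).add h.cesaro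

theorem tendsto_atTop_of_le_sub {u : ℕ → ℝ} {δ : ℝ} (hδ : 0 < δ) {N : ℕ}
    (h : ∀ n ≥ N, δ ≤ u (n + 1) - u n) : Tendsto u atTop atTop := by
  have hlin : ∀ n : ℕ, u N + n * δ ≤ u (n + N) := by
    intro n
    induction n with
    | zero => simp
    | succ k ih =>
      have := h (k + N) (by omega)
      rw [Nat.add_right_comm]
      push_cast
      linarith
  rw [← tendsto_add_atTop_iff_nat N]
  exact tendsto_atTop_mono hlin <| tendsto_atTop_add_const_left _ _ <|
    tendsto_natCast_atTop_atTop.atTop_mul_const hδ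

theorem eventually_div_le_and_le_div {ι : Type*} {l : Filter ι} {x y : ι → ℝ}
    (hx : ∀ᶠ n in l, 0 < x n) (h : Tendsto (fun n => x n * y n) l (𝓝 1)) {α : ℝ} (hα : 0 < α) :
    ∀ᶠ n in l, (1 - α) / x n ≤ y n ∧ y n ≤ (1 + α) / x n := by
  have hnhds : Set.Ioo (1 - α) (1 + α) ∈ 𝓝 1 := Ioo_mem_nhds (by linarith) (by linarith)
  filter_upwards [hx, h.eventually hnhds] with n hxn hxy
  rw [div_le_iff₀ hxn, le_div_iff₀ hxn, mul_comm (y n)]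
  exact ⟨hxy.1.le, hxy.2.le⟩

noncomputable def dampMap (b x : ℝ) : ℝ := (1 - b * (x / (1 + x))) * x

section dampMap

variable {b x : ℝ}

theorem dampMap_eq (hx : 0 ≤ x) : dampMap b x = (1 + (1 - b) * x) * x / (1 + x) := by
  have : 1 + x ≠ 0 := by positivity
  unfold dampMap
  field_simp
  ring

theorem dampMap_pos (hb : b ≤ 1) (hx : 0 < x) : 0 < dampMap b x := by
  rw [dampMap_eq hx.le]
  have : 0 ≤ (1 - b) * x := mul_nonneg (by linarith) hx.le
  positivity

theorem dampMap_le (hb : 0 ≤ b) (hx : 0 ≤ x) : dampMap b x ≤ x := by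
  have : 0 ≤ b * (x / (1 + x)) := by positivity
  unfold dampMap
  nlinarith

theorem inv_dampMap (hb : b ≤ 1) (hx : 0 < x) :
    (dampMap b x)⁻¹ = x⁻¹ + b / (1 + (1 - b) * x) := by
  have : 0 < 1 + (1 - b) * x := by nlinarith
  rw [dampMap_eq hx.le]
  field_simp
  ring

end dampMap

section Recursion

variable {b : ℝ} {a : ℕ → ℝ}

theorem pos_of_dampMap_rec (hrec : ∀ t ≥ 1, a (t + 1) = dampMap b (a t))
    (hb : b ≤ 1) (ha1 : 0 < a 1) : ∀ t ≥ 1, 0 < a t := by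
  intro t ht
  induction t, ht using Nat.le_induction with
  | base => exact ha1
  | succ t ht ih => rw [hrec t ht]; exact dampMap_pos hb ih

theorem le_first_of_dampMap_rec (hrec : ∀ t ≥ 1, a (t + 1) = dampMap b (a t))
    (hb0 : 0 ≤ b) (hpos : ∀ t ≥ 1, 0 < a t) : ∀ t ≥ 1, a t ≤ a 1 := by
  intro t ht
  induction t, ht using Nat.le_induction with
  | base => rfl
  | succ t ht ih => rw [hrec t ht]; exact (dampMap_le hb0 (hpos t ht).le).trans ih

theorem inv_succ_sub_inv_of_dampMap_rec (hrec : ∀ t ≥ 1, a (t + 1) = dampMap b (a t))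
    (hb : b ≤ 1) (hpos : ∀ t ≥ 1, 0 < a t) {t : ℕ} (ht : 1 ≤ t) :
    (a (t + 1))⁻¹ - (a t)⁻¹ = b / (1 + (1 - b) * a t) := by
  rw [hrec t ht, inv_dampMap hb (hpos t ht)]
  ring

theorem tendsto_zero_of_dampMap_rec (hrec : ∀ t ≥ 1, a (t + 1) = dampMap b (a t))
    (hb0 : 0 < b) (hb1 : b ≤ 1) (ha1 : 0 < a 1) : Tendsto a atTop (𝓝 0) := by
  have hpos := pos_of_dampMap_rec hrec hb1 ha1
  have hinc : ∀ t ≥ 1, b / (1 + (1 - b) * a 1) ≤ (a (t + 1))⁻¹ - (a t)⁻¹ := by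
    intro t ht
    rw [inv_succ_sub_inv_of_dampMap_rec hrec hb1 hpos ht]
    have := le_first_of_dampMap_rec hrec hb0.le hpos t ht
    gcongr
    nlinarith [hpos t ht]
  have hδ : 0 < b / (1 + (1 - b) * a 1) := by
    have : 0 ≤ (1 - b) * a 1 := mul_nonneg (by linarith) ha1.le
    positivity
  simpa only [Pi.inv_def, inv_inv] using
    (tendsto_atTop_of_le_sub (u := fun t => (a t)⁻¹) hδ hinc).inv_tendsto_atTop

theorem tendsto_inv_succ_sub_inv_of_dampMap_rec (hrec : ∀ t ≥ 1, a (t + 1) = dampMap b (a t))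
    (hb0 : 0 < b) (hb1 : b ≤ 1) (ha1 : 0 < a 1) :
    Tendsto (fun t => (a (t + 1))⁻¹ - (a t)⁻¹) atTop (𝓝 b) := by
  have hpos := pos_of_dampMap_rec hrec hb1 ha1
  have hlim : Tendsto (fun t => b / (1 + (1 - b) * a t)) atTop (𝓝 (b / (1 + (1 - b) * 0))) :=
    tendsto_const_nhds.div ((tendsto_zero_of_dampMap_rec hrec hb0 hb1 ha1).const_mul _
      |>.const_add _) (by simp)
  rw [mul_zero, add_zero, div_one] at hlim
  refine hlim.congr' ?_
  filter_upwards [eventually_ge_atTop 1] with t ht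
  exact (inv_succ_sub_inv_of_dampMap_rec hrec hb1 hpos ht).symm

theorem tendsto_mul_natCast_mul_of_dampMap_rec (hrec : ∀ t ≥ 1, a (t + 1) = dampMap b (a t))
    (hb0 : 0 < b) (hb1 : b ≤ 1) (ha1 : 0 < a 1) :
    Tendsto (fun t : ℕ => b * t * a t) atTop (𝓝 1) := by
  have h := ((tendsto_inv_succ_sub_inv_of_dampMap_rec hrec hb0 hb1 ha1).div_natCast_of_tendsto_sub
    (u := fun t => (a t)⁻¹) |>.inv₀ hb0.ne').const_mul b
  rw [mul_inv_cancel₀ hb0.ne'] at h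
  refine h.congr fun t => ?_
  rw [div_eq_mul_inv, mul_inv, inv_inv, inv_inv]
  ring

end Recursion

/-- **Lemma 2 (Appendix B).** For `b ∈ (0,1)` and the sequence `a_{t+1} = (1 − b a_t/(1+a_t)) a_t`
with `a₁ > 0`, for every `α > 0` there exists `T` such that
`(1−α)/(b t) ≤ a_t ≤ (1+α)/(b t)` for all `t ≥ T`. -/
theorem stmt_3 (b : ℝ) (hb0 : 0 < b) (hb1 : b < 1)
    (a : ℕ → ℝ) (ha1 : 0 < a 1)
    (hrec : ∀ t ≥ 1, a (t + 1) = (1 - b * (a t / (1 + a t))) * a t)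
    (α : ℝ) (hα : 0 < α) :
    ∃ T : ℕ, ∀ t ≥ T, (1 - α) / (b * t) ≤ a t ∧ a t ≤ (1 + α) / (b * t) := by
  have hlim := tendsto_mul_natCast_mul_of_dampMap_rec hrec hb0 hb1.le ha1
  have hbt : ∀ᶠ t : ℕ in atTop, 0 < b * t :=
    (eventually_gt_atTop 0).mono fun t ht => by positivity
  exact eventually_atTop.mp (eventually_div_le_and_le_div hbt hlim hα)
end

section
/- Let b ∈ (0,1) and let (a_t)_{t≥1} satisfy a₁ > 0 and a_{t+1} = (1 − b·a_t/(1+a_t))·a_t for all t ≥ 1. Define γ_t = 1/a_t − b t. Then the sequence (γ_t)_{t≥1} is strictly decreasing: γ_{t+1} < γ_t for all t ≥ 1. -/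
/-!
Writing `f(a) = (1 - b a/(1+a)) a = a (1 + (1-b) a)/(1+a)`, one gets
`1/f(a) - 1/a = b/(1 + (1-b) a)`, which is strictly less than `b` as soon as `a > 0` and
`0 < b < 1`. Since the iterates stay positive, `1/a_{t+1} - 1/a_t < b`, i.e. `γ_{t+1} < γ_t`.
-/

/-- The map `f` of the iteration `a_{t+1} = f(a_t)`. -/
noncomputable def dampedStep (b a : ℝ) : ℝ := (1 - b * (a / (1 + a))) * a

lemma dampedStep_eq {b a : ℝ} (ha : 1 + a ≠ 0) :
    dampedStep b a = a * (1 + (1 - b) * a) / (1 + a) := by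
  unfold dampedStep
  field_simp
  ring

lemma dampedStep_pos {b a : ℝ} (hb : b ≤ 1) (ha : 0 < a) : 0 < dampedStep b a := by
  rw [dampedStep_eq (by positivity)]
  have : 0 ≤ (1 - b) * a := mul_nonneg (sub_nonneg.mpr hb) ha.le
  positivity

lemma one_div_dampedStep_sub_one_div {b a : ℝ} (ha : 0 < a) (hD : 0 < 1 + (1 - b) * a) :
    1 / dampedStep b a - 1 / a = b / (1 + (1 - b) * a) := by
  rw [dampedStep_eq (by positivity), one_div_div,
    div_sub_div _ _ (by positivity) ha.ne', div_eq_div_iff (by positivity) hD.ne']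
  ring

lemma one_div_dampedStep_lt {b a : ℝ} (hb0 : 0 < b) (hb1 : b < 1) (ha : 0 < a) :
    1 / dampedStep b a < 1 / a + b := by
  have hba : 0 < (1 - b) * a := mul_pos (sub_pos.mpr hb1) ha
  have hD : 0 < 1 + (1 - b) * a := by linarith
  have hlt : b / (1 + (1 - b) * a) < b := div_lt_self hb0 (by linarith)
  linarith [one_div_dampedStep_sub_one_div ha hD]

/-- For `b ∈ (0,1)` and the sequence `a_{t+1} = (1 − b a_t/(1+a_t)) a_t` with `a₁ > 0`,
the sequence `γ_t = 1/a_t − b t` is strictly decreasing. -/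
theorem stmt_4 (b : ℝ) (hb0 : 0 < b) (hb1 : b < 1)
    (a : ℕ → ℝ) (ha1 : 0 < a 1)
    (hrec : ∀ t ≥ 1, a (t + 1) = (1 - b * (a t / (1 + a t))) * a t)
    (γ : ℕ → ℝ) (hγ : ∀ t, γ t = 1 / a t - b * t) :
    ∀ t ≥ 1, γ (t + 1) < γ t := by
  have hstep : ∀ t ≥ 1, a (t + 1) = dampedStep b (a t) := hrec
  have hpos : ∀ t ≥ 1, 0 < a t := by
    intro t ht
    induction t, ht using Nat.le_induction with
    | base => exact ha1
    | succ t ht ih => rw [hstep t ht]; exact dampedStep_pos hb1.le ih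
  intro t ht
  have hlt := one_div_dampedStep_lt hb0 hb1 (hpos t ht)
  rw [hγ, hγ, hstep t ht]
  push_cast
  linarith
end

section
/- Let L and P be positive integers with P ≤ L, let δ > 0, and let X ∈ R^{L×P}. Let μ₁, …, μ_P be the eigenvalues (with multiplicity) of the symmetric positive semidefinite matrix Xᵀ X. Then tr((I_L − X (δ I_P + Xᵀ X)⁻¹ Xᵀ)²) = (L − P) + Σ_{i=1}^{P} δ²/(δ + μ_i)². -/
/-!
Write `S = XᵀX` and `M = δ I + S`. Cycling traces,
`tr((I_L − X C)²) = (L − P) + tr((I_P − C X)²)` for any `C`; with `C = M⁻¹ Xᵀ` the inner factor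
is `I_P − M⁻¹ S = δ M⁻¹`, which is `g(S)` for `g(x) = δ / (δ + x)` in the functional calculus of
the symmetric matrix `S`. Hence its square has trace `∑ᵢ g(μᵢ)²`.
-/

open Matrix

namespace Matrix

variable {m n R : Type*} [Fintype m] [Fintype n] [DecidableEq m] [DecidableEq n]

theorem trace_one_sub_mul_mul_self [CommRing R] (A : Matrix m n R) (C : Matrix n m R) :
    ((1 - A * C) * (1 - A * C)).trace
      = (Fintype.card m - Fintype.card n : R) + ((1 - C * A) * (1 - C * A)).trace := by
  have hcycle : (A * C * (A * C)).trace = (C * A * (C * A)).trace := by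
    rw [← Matrix.mul_assoc, trace_mul_comm, Matrix.mul_assoc, Matrix.mul_assoc]
  simp only [sub_mul, mul_sub, one_mul, mul_one, trace_sub, trace_one, hcycle,
    trace_mul_comm A C]
  ring

theorem one_sub_inv_smul_one_add_mul [CommRing R] (c : R) (S : Matrix n n R)
    (h : IsUnit (c • 1 + S).det) :
    1 - (c • 1 + S)⁻¹ * S = c • (c • 1 + S)⁻¹ := by
  calc 1 - (c • 1 + S)⁻¹ * S = 1 - (c • 1 + S)⁻¹ * ((c • 1 + S) - c • 1) := by
        rw [add_sub_cancel_left]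
    _ = c • (c • 1 + S)⁻¹ := by
        rw [Matrix.mul_sub, nonsing_inv_mul _ h, mul_smul_comm, Matrix.mul_one, sub_sub_cancel]

namespace IsHermitian

variable {𝕜 : Type*} [RCLike 𝕜] {A : Matrix n n 𝕜}

theorem trace_cfc (hA : A.IsHermitian) (f : ℝ → ℝ) :
    (cfc f A).trace = ∑ i, (f (hA.eigenvalues i) : 𝕜) := by
  rw [hA.cfc_eq, IsHermitian.cfc, Unitary.conjStarAlgAut_apply, trace_mul_cycle,
    Unitary.coe_star_mul_self, Matrix.one_mul, trace_diagonal]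
  rfl

theorem smul_inv_smul_one_add_eq_cfc (hA : A.IsHermitian) (c : ℝ)
    (hc : ∀ i, c + hA.eigenvalues i ≠ 0) :
    c • (c • 1 + A)⁻¹ = cfc (fun x => c / (c + x)) A := by
  have hspec : ∀ x ∈ spectrum ℝ A, c + x ≠ 0 := by
    rw [hA.spectrum_real_eq_range_eigenvalues]
    rintro - ⟨i, rfl⟩
    exact hc i
  simp_rw [div_eq_mul_inv]
  rw [cfc_const_mul c _ A (A.finite_real_spectrum.continuousOn _),
    cfc_inv (fun x => c + x) A hspec, cfc_const_add c (fun x => x) A, cfc_id' ℝ A,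
    Algebra.algebraMap_eq_smul_one, nonsing_inv_eq_ringInverse]

end IsHermitian

end Matrix

theorem stmt_15_general (L P : ℕ)
    (δ : ℝ) (hδ : 0 < δ) (X : Matrix (Fin L) (Fin P) ℝ)
    (hH : (Xᵀ * X).IsHermitian) :
    ((1 - X * ((δ • (1 : Matrix (Fin P) (Fin P) ℝ) + Xᵀ * X)⁻¹) * Xᵀ)
        * (1 - X * ((δ • (1 : Matrix (Fin P) (Fin P) ℝ) + Xᵀ * X)⁻¹) * Xᵀ)).trace
      = ((L : ℝ) - P) + ∑ i, δ ^ 2 / (δ + hH.eigenvalues i) ^ 2 := by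
  have hXX : (Xᵀ * X).PosSemidef := by simpa using posSemidef_conjTranspose_mul_self X
  have hdet : IsUnit (δ • (1 : Matrix (Fin P) (Fin P) ℝ) + Xᵀ * X).det :=
    (isUnit_iff_isUnit_det _).mp ((PosDef.one.smul hδ).add_posSemidef hXX).isUnit
  have hμ : ∀ i, δ + hH.eigenvalues i ≠ 0 := fun i =>
    (add_pos_of_pos_of_nonneg hδ (hXX.eigenvalues_nonneg i)).ne'
  rw [Matrix.mul_assoc X, trace_one_sub_mul_mul_self, Matrix.mul_assoc _ Xᵀ X,
    one_sub_inv_smul_one_add_mul δ _ hdet, hH.smul_inv_smul_one_add_eq_cfc δ hμ,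
    ← cfc_mul _ _ _ ((Xᵀ * X).finite_real_spectrum.continuousOn _)
      ((Xᵀ * X).finite_real_spectrum.continuousOn _), hH.trace_cfc]
  simp [div_mul_div_comm, sq]

/-- **Trace of the squared error contraction matrix.** For `A = I_L − X (δ I_P + Xᵀ X)⁻¹ Xᵀ`
and eigenvalues `μᵢ` of `Xᵀ X`,
`tr(A²) = (L − P) + Σᵢ δ²/(δ + μᵢ)²`. -/
theorem stmt_15 (L P : ℕ) (hL : 0 < L) (hP : 0 < P) (hPL : P ≤ L)
    (δ : ℝ) (hδ : 0 < δ) (X : Matrix (Fin L) (Fin P) ℝ)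
    (hH : (Xᵀ * X).IsHermitian) :
    ((1 - X * ((δ • (1 : Matrix (Fin P) (Fin P) ℝ) + Xᵀ * X)⁻¹) * Xᵀ)
        * (1 - X * ((δ • (1 : Matrix (Fin P) (Fin P) ℝ) + Xᵀ * X)⁻¹) * Xᵀ)).trace
      = ((L : ℝ) - P) + ∑ i, δ ^ 2 / (δ + hH.eigenvalues i) ^ 2 :=
  stmt_15_general L P δ hδ X hH
end
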